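/- arXiv:1712.04183 — 4 statements merged into one kernel-verified Lean document; each statement's English description precedes it below -/
import Mathlib

section
/- Let (P, M, Q) be a regular tournament with multiple group stages such that, under every complete set of preliminary-round results, no two teams from the same preliminary-round group are assigned to the same main-round group (so by regularity no preliminary-round results are carried over). Then the tournament is strategy-proof. -/
/-!
Tournaments with multiple group stages (Csató).  A (possibly partial) set of
results assigns to each ordered pair of distinct teams either the pair of goals
scored by the two teams in their match, or `none` (= ⊗, match not yet played).
-/

open Finset

/-- A (possibly partial) set of results: `V x y = some (p, q)` means the match
between `x` and `y` has been played with `x` scoring `p` goals and `y` scoring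
`q` goals; `V x y = none` means the match is not (yet) played. -/
abbrev ResultSet (T : Type*) := T → T → Option (ℕ × ℕ)

section Defs

variable {T : Type*} [DecidableEq T]

/-- `x` has won its (played) match against `y`. -/
def beats (V : ResultSet T) (x y : T) : Bool :=
  match V x y with
  | some (p, q) => decide (q < p)
  | none => false

/-- Number of wins of `x` in its matches against the teams of `G`. -/
def winsIn (V : ResultSet T) (G : Finset T) (x : T) : ℕ :=
  (G.filter fun y => y ≠ x ∧ beats V x y).card

/-- Number of losses of `x` in its matches against the teams of `G`. -/
def lossesIn (V : ResultSet T) (G : Finset T) (x : T) : ℕ :=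
  (G.filter fun y => y ≠ x ∧ beats V y x).card

/-- Number of points of `x` computed from its matches against the teams of `G`:
`α` points per win and `β` points per loss. -/
def pointsIn (α β : ℤ) (V : ResultSet T) (G : Finset T) (x : T) : ℤ :=
  α * winsIn V G x + β * lossesIn V G x

/-- Goal difference of `x` in its (played) match against `y` (0 if unplayed). -/
def goalDiff (V : ResultSet T) (x y : T) : ℤ :=
  match V x y with
  | some (p, q) => (p : ℤ) - q
  | none => 0

/-- Goal difference of `x` computed from its matches against the teams of `G`. -/
def gdIn (V : ResultSet T) (G : Finset T) (x : T) : ℤ :=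
  ∑ y ∈ G.filter (fun y => y ≠ x), goalDiff V x y

/-- The set of teams of `G` scoring the same number of points as `x` in `G`. -/
def tiedIn (α β : ℤ) (V : ResultSet T) (G : Finset T) (x : T) : Finset T :=
  G.filter fun z => pointsIn α β V G z = pointsIn α β V G x

/-- `x` head-to-head dominates `y` (both scoring the same number of points in the
group `G`, and `L` being the set of all teams of `G` with this number of points):
`x` has strictly more head-to-head points than `y` with respect to `L`, or the same
number of head-to-head points and a strictly greater head-to-head goal difference. -/
def Dominates (α β : ℤ) (V : ResultSet T) (G : Finset T) (x y : T) : Prop :=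
  pointsIn α β V (tiedIn α β V G x) x > pointsIn α β V (tiedIn α β V G x) y ∨
    (pointsIn α β V (tiedIn α β V G x) x = pointsIn α β V (tiedIn α β V G x) y ∧
      gdIn V (tiedIn α β V G x) x > gdIn V (tiedIn α β V G x) y)

/-- `r` is a strict total order on the (teams of the) group `G`. -/
def StrictOrderOn (G : Finset T) (r : T → T → Prop) : Prop :=
  (∀ x ∈ G, ¬r x x) ∧
    (∀ x ∈ G, ∀ y ∈ G, ∀ z ∈ G, r x y → r y z → r x z) ∧
    (∀ x ∈ G, ∀ y ∈ G, x ≠ y → r x y ∨ r y x)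

/-- The ranking `r` of the group `G` under the results `V` is monotonic:
(1) strictly more points implies a strictly higher rank; (2) equal points together
with a strictly greater goal difference and head-to-head domination imply a
strictly higher rank. -/
def MonotonicOn (α β : ℤ) (V : ResultSet T) (G : Finset T) (r : T → T → Prop) : Prop :=
  (∀ x ∈ G, ∀ y ∈ G, pointsIn α β V G x > pointsIn α β V G y → r x y) ∧
    (∀ x ∈ G, ∀ y ∈ G, pointsIn α β V G x = pointsIn α β V G y →
      gdIn V G x > gdIn V G y → Dominates α β V G x y → r x y)

end Defs

/-- A tournament with multiple group stages: `k` preliminary-round groups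
`X 0, …, X (k-1)` (pairwise disjoint, each with at least two teams), `ℓ`
main-round groups, points `α` per win and `β` per loss with `α > β`, a common
preliminary-round ranking method `R`, a common main-round ranking method `S`,
and a qualification rule determining, from any complete set `V` of
preliminary-round results, the main-round groups `Y V 0, …, Y V (ℓ-1)` and the
set `W V` of results carried over to the main round. -/
structure MGSTournament (T : Type*) [DecidableEq T] (k ℓ : ℕ) where
  X : Fin k → Finset T
  Xdisj : ∀ i j : Fin k, i ≠ j → Disjoint (X i) (X j)
  Xcard : ∀ i : Fin k, 2 ≤ (X i).card
  α : ℤ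
  β : ℤ
  hαβ : β < α
  R : ResultSet T → T → T → Prop
  S : ResultSet T → T → T → Prop
  Y : ResultSet T → Fin ℓ → Finset T
  W : ResultSet T → ResultSet T

namespace MGSTournament

variable {T : Type*} [DecidableEq T] {k ℓ : ℕ}

/-- `V` is a complete set of preliminary-round results: every match inside a
preliminary-round group has been played (recorded symmetrically in both orders),
no match ends in a draw, and there are no other matches. -/
def Complete (Tr : MGSTournament T k ℓ) (V : ResultSet T) : Prop :=
  (∀ i : Fin k, ∀ x ∈ Tr.X i, ∀ y ∈ Tr.X i, x ≠ y →
      ∃ p q : ℕ, p ≠ q ∧ V x y = some (p, q) ∧ V y x = some (q, p)) ∧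
    ∀ x y : T, (∀ i : Fin k, ¬(x ∈ Tr.X i ∧ y ∈ Tr.X i ∧ x ≠ y)) → V x y = none

/-- Team `x` qualifies to the main round under the complete preliminary results `V`. -/
def Qualified (Tr : MGSTournament T k ℓ) (V : ResultSet T) (x : T) : Prop :=
  ∃ j : Fin ℓ, x ∈ Tr.Y V j

/-- Regularity of a tournament with multiple group stages: under every complete
set of preliminary-round results, (a) every main-round team comes from some
preliminary-round group, and the main-round groups are pairwise disjoint;
(b) the common preliminary ranking `R` is a monotonic strict total order on each
preliminary group and qualification respects it; (c) a match between two teams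
of the same preliminary group assigned to the same main-round group is carried
over unchanged; (d) a match between teams coming from different preliminary
groups is not yet played at the start of the main round; (e) the common main
round ranking `S` is a monotonic strict total order on each main-round group. -/
def Regular (Tr : MGSTournament T k ℓ) : Prop :=
  ∀ V : ResultSet T, Tr.Complete V →
    (∀ j : Fin ℓ, ∀ x ∈ Tr.Y V j, ∃ i : Fin k, x ∈ Tr.X i) ∧
    (∀ j j' : Fin ℓ, j ≠ j' → Disjoint (Tr.Y V j) (Tr.Y V j')) ∧
    (∀ i : Fin k, StrictOrderOn (Tr.X i) (Tr.R V) ∧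
      MonotonicOn Tr.α Tr.β V (Tr.X i) (Tr.R V)) ∧
    (∀ i : Fin k, ∀ x ∈ Tr.X i, ∀ y ∈ Tr.X i,
      Tr.R V x y → Tr.Qualified V y → Tr.Qualified V x) ∧
    (∀ i : Fin k, ∀ j : Fin ℓ, ∀ x ∈ Tr.X i, ∀ y ∈ Tr.X i,
      x ∈ Tr.Y V j → y ∈ Tr.Y V j → x ≠ y → Tr.W V x y = V x y) ∧
    (∀ i h : Fin k, i ≠ h → ∀ j : Fin ℓ, ∀ x ∈ Tr.X i, ∀ y ∈ Tr.X h,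
      x ∈ Tr.Y V j → y ∈ Tr.Y V j → Tr.W V x y = none) ∧
    (∀ j : Fin ℓ, StrictOrderOn (Tr.Y V j) (Tr.S V) ∧
      MonotonicOn Tr.α Tr.β (Tr.W V) (Tr.Y V j) (Tr.S V))

/-- Team `x` can manipulate the tournament: there are complete preliminary result
sets `V` and `V'`, where `V'` is obtained from `V` by changing only matches
involving `x` so that in each of its matches `x` scores weakly fewer and concedes
weakly more goals, such that `x` qualifies to the same main-round group under
both, and `x`'s carried-over number of points strictly increases, or stays the
same while `x`'s carried-over goal difference strictly increases. -/
def Manipulates (Tr : MGSTournament T k ℓ) (x : T) : Prop :=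
  ∃ V V' : ResultSet T, Tr.Complete V ∧ Tr.Complete V' ∧
    (∀ y z : T, y ≠ x → z ≠ x → V' y z = V y z) ∧
    (∀ y : T, ∀ p q p' q' : ℕ, V x y = some (p, q) → V' x y = some (p', q') →
      p' ≤ p ∧ q ≤ q') ∧
    ∃ j : Fin ℓ, x ∈ Tr.Y V j ∧ x ∈ Tr.Y V' j ∧
      (pointsIn Tr.α Tr.β (Tr.W V') (Tr.Y V' j) x >
          pointsIn Tr.α Tr.β (Tr.W V) (Tr.Y V j) x ∨
        (pointsIn Tr.α Tr.β (Tr.W V') (Tr.Y V' j) x =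
            pointsIn Tr.α Tr.β (Tr.W V) (Tr.Y V j) x ∧
          gdIn (Tr.W V') (Tr.Y V' j) x > gdIn (Tr.W V) (Tr.Y V j) x))

/-- The tournament is strategy-proof if no team can manipulate. -/
def StrategyProof (Tr : MGSTournament T k ℓ) : Prop :=
  ∀ x : T, ¬Tr.Manipulates x

end MGSTournament

/-- **Proposition 3.2, first case.** Let `(P, M, Q)` be a regular tournament with
multiple group stages such that, under every complete set of preliminary-round
results, no two teams from the same preliminary-round group are assigned to the
same main-round group (so no preliminary-round results are carried over).  Then
the tournament is strategy-proof. -/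
theorem strategyProof_of_no_carryover
    {T : Type*} [DecidableEq T] {k ℓ : ℕ} (Tr : MGSTournament T k ℓ)
    (hreg : Tr.Regular)
    (hcond : ∀ V : ResultSet T, Tr.Complete V → ∀ i : Fin k, ∀ j : Fin ℓ,
      ∀ x ∈ Tr.X i, ∀ y ∈ Tr.X i, x ≠ y → ¬(x ∈ Tr.Y V j ∧ y ∈ Tr.Y V j)) :
    Tr.StrategyProof := by
  intro x hman
  obtain ⟨V, V', hV, hV', _, _, j, hxV, hxV', hinc⟩ := hman
  have key : ∀ (V : ResultSet T), Tr.Complete V → ∀ j : Fin ℓ, ∀ x ∈ Tr.Y V j,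
      pointsIn Tr.α Tr.β (Tr.W V) (Tr.Y V j) x = 0 ∧ gdIn (Tr.W V) (Tr.Y V j) x = 0 := by
    intro V hV j x hx
    obtain ⟨ha, -, -, -, -, hd, -⟩ := hreg V hV
    have hnone : ∀ y ∈ Tr.Y V j, y ≠ x → Tr.W V x y = none ∧ Tr.W V y x = none := by
      intro y hy hyx
      obtain ⟨i, hxi⟩ := ha j x hx
      obtain ⟨h, hyh⟩ := ha j y hy
      have hih : i ≠ h := by
        rintro rfl
        exact hcond V hV i j x hxi y hyh (Ne.symm hyx) ⟨hx, hy⟩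
      exact ⟨hd i h hih j x hxi y hyh hx hy, hd h i hih.symm j y hyh x hxi hy hx⟩
    have hw : winsIn (Tr.W V) (Tr.Y V j) x = 0 := by
      simp only [winsIn, Finset.card_eq_zero, Finset.filter_eq_empty_iff]
      rintro y hy ⟨hyx, hb⟩
      simp [beats, (hnone y hy hyx).1] at hb
    have hl : lossesIn (Tr.W V) (Tr.Y V j) x = 0 := by
      simp only [lossesIn, Finset.card_eq_zero, Finset.filter_eq_empty_iff]
      rintro y hy ⟨hyx, hb⟩
      simp [beats, (hnone y hy hyx).2] at hb
    refine ⟨by simp [pointsIn, hw, hl], ?_⟩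
    refine Finset.sum_eq_zero ?_
    intro y hy
    obtain ⟨hy1, hy2⟩ := Finset.mem_filter.mp hy
    simp [goalDiff, (hnone y hy1 hy2).1]
  obtain ⟨hp, hg⟩ := key V hV j x hxV
  obtain ⟨hp', hg'⟩ := key V' hV' j x hxV'
  rcases hinc with h | ⟨-, h⟩ <;> omega
end

section
/- Let (P, M, Q) be a regular tournament with multiple group stages such that, under every complete set of preliminary-round results and for every preliminary-round group X^i, if some team of X^i is assigned to a main-round group Y^j then every team of X^i is assigned to Y^j (so all matches of each preliminary group are carried over to the main round). Then the tournament is strategy-proof. -/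
/-!
Tournaments with multiple group stages (Csató).  A (possibly partial) set of
results assigns to each ordered pair of distinct teams either the pair of goals
scored by the two teams in their match, or `none` (= ⊗, match not yet played).
-/

open Finset

section AuxLemmas

variable {T : Type*} [DecidableEq T] {k ℓ : ℕ}

lemma beats_congr {V V' : ResultSet T} {x y : T} (h : V x y = V' x y) :
    beats V x y = beats V' x y := by unfold beats; rw [h]

lemma goalDiff_congr {V V' : ResultSet T} {x y : T} (h : V x y = V' x y) :
    goalDiff V x y = goalDiff V' x y := by unfold goalDiff; rw [h]

lemma beats_none {V : ResultSet T} {x y : T} (h : V x y = none) :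
    beats V x y = false := by unfold beats; rw [h]

lemma goalDiff_none {V : ResultSet T} {x y : T} (h : V x y = none) :
    goalDiff V x y = 0 := by unfold goalDiff; rw [h]

lemma winsIn_add_lossesIn {V : ResultSet T} {G : Finset T} {x : T}
    (h : ∀ y ∈ G, y ≠ x → ∃ p q : ℕ, p ≠ q ∧ V x y = some (p, q) ∧ V y x = some (q, p)) :
    winsIn V G x + lossesIn V G x = (G.filter (· ≠ x)).card := by
  unfold winsIn lossesIn
  rw [← Finset.card_union_of_disjoint]
  · apply congrArg Finset.card
    ext y
    simp only [Finset.mem_union, Finset.mem_filter]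
    constructor
    · rintro (⟨hy, hne, _⟩ | ⟨hy, hne, _⟩) <;> exact ⟨hy, hne⟩
    · rintro ⟨hy, hne⟩
      obtain ⟨p, q, hpq, h1, h2⟩ := h y hy hne
      rcases Nat.lt_or_ge q p with hlt | hge
      · left; exact ⟨hy, hne, by unfold beats; rw [h1]; simpa using hlt⟩
      · right
        have hlt : p < q := lt_of_le_of_ne hge hpq
        exact ⟨hy, hne, by unfold beats; rw [h2]; simpa using hlt⟩
  · rw [Finset.disjoint_left]
    intro y hy1 hy2
    simp only [Finset.mem_filter] at hy1 hy2
    obtain ⟨hy, hne, hb1⟩ := hy1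
    obtain ⟨_, _, hb2⟩ := hy2
    obtain ⟨p, q, hpq, h1, h2⟩ := h y hy hne
    have e1 : q < p := by unfold beats at hb1; rw [h1] at hb1; simpa using hb1
    have e2 : p < q := by unfold beats at hb2; rw [h2] at hb2; simpa using hb2
    omega

lemma carryKey (Tr : MGSTournament T k ℓ) (V : ResultSet T) (i : Fin k) (j : Fin ℓ) (x : T)
    (ha : ∀ y ∈ Tr.Y V j, ∃ h : Fin k, y ∈ Tr.X h)
    (hc : ∀ i : Fin k, ∀ x ∈ Tr.X i, ∀ y ∈ Tr.X i,
      x ∈ Tr.Y V j → y ∈ Tr.Y V j → x ≠ y → Tr.W V x y = V x y)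
    (hd : ∀ i h : Fin k, i ≠ h → ∀ x ∈ Tr.X i, ∀ y ∈ Tr.X h,
      x ∈ Tr.Y V j → y ∈ Tr.Y V j → Tr.W V x y = none)
    (hsub : ∀ y ∈ Tr.X i, y ∈ Tr.Y V j) (hx : x ∈ Tr.X i) :
    pointsIn Tr.α Tr.β (Tr.W V) (Tr.Y V j) x = pointsIn Tr.α Tr.β V (Tr.X i) x ∧
      gdIn (Tr.W V) (Tr.Y V j) x = gdIn V (Tr.X i) x := by
  have keyin : ∀ y ∈ Tr.X i, y ≠ x → Tr.W V x y = V x y ∧ Tr.W V y x = V y x := fun y hy hne =>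
    ⟨hc i x hx y hy (hsub x hx) (hsub y hy) hne.symm,
     hc i y hy x hx (hsub y hy) (hsub x hx) hne⟩
  have keyout : ∀ y ∈ Tr.Y V j, y ∉ Tr.X i → Tr.W V x y = none ∧ Tr.W V y x = none := by
    intro y hyY hyX
    obtain ⟨h, hyh⟩ := ha y hyY
    have hne : i ≠ h := fun e => hyX (e ▸ hyh)
    exact ⟨hd i h hne x hx y hyh (hsub x hx) hyY,
           hd h i hne.symm y hyh x hx hyY (hsub x hx)⟩
  have hw : winsIn (Tr.W V) (Tr.Y V j) x = winsIn V (Tr.X i) x := by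
    unfold winsIn
    apply congrArg Finset.card
    ext y
    simp only [Finset.mem_filter]
    constructor
    · rintro ⟨hyY, hne, hb⟩
      by_cases hyX : y ∈ Tr.X i
      · exact ⟨hyX, hne, by rwa [beats_congr (keyin y hyX hne).1] at hb⟩
      · rw [beats_none (keyout y hyY hyX).1] at hb; exact absurd hb (by simp)
    · rintro ⟨hyX, hne, hb⟩
      exact ⟨hsub y hyX, hne, by rwa [← beats_congr (keyin y hyX hne).1] at hb⟩
  have hl : lossesIn (Tr.W V) (Tr.Y V j) x = lossesIn V (Tr.X i) x := by
    unfold lossesIn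
    apply congrArg Finset.card
    ext y
    simp only [Finset.mem_filter]
    constructor
    · rintro ⟨hyY, hne, hb⟩
      by_cases hyX : y ∈ Tr.X i
      · exact ⟨hyX, hne, by rwa [beats_congr (keyin y hyX hne).2] at hb⟩
      · rw [beats_none (keyout y hyY hyX).2] at hb; exact absurd hb (by simp)
    · rintro ⟨hyX, hne, hb⟩
      exact ⟨hsub y hyX, hne, by rwa [← beats_congr (keyin y hyX hne).2] at hb⟩
  refine ⟨by unfold pointsIn; rw [hw, hl], ?_⟩
  unfold gdIn
  have hss : (Tr.X i).filter (fun y => y ≠ x) ⊆ (Tr.Y V j).filter (fun y => y ≠ x) := by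
    intro y hy
    simp only [Finset.mem_filter] at hy ⊢
    exact ⟨hsub y hy.1, hy.2⟩
  rw [← Finset.sum_subset hss (fun y hy hny => ?_)]
  · refine Finset.sum_congr rfl fun y hy => ?_
    simp only [Finset.mem_filter] at hy
    exact goalDiff_congr (keyin y hy.1 hy.2).1
  · simp only [Finset.mem_filter] at hy hny
    have hyX : y ∉ Tr.X i := fun h => hny ⟨h, hy.2⟩
    exact goalDiff_none (keyout y hy.1 hyX).1

end AuxLemmas

/-- **Proposition 3.2, second case.** Let `(P, M, Q)` be a regular tournament
with multiple group stages such that, under every complete set of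
preliminary-round results and for every preliminary-round group `X i`, if some
team of `X i` is assigned to a main-round group `Y j` then every team of `X i`
is assigned to `Y j` (so all matches of each preliminary group are carried over
to the main round).  Then the tournament is strategy-proof. -/
theorem strategyProof_of_full_carryover
    {T : Type*} [DecidableEq T] {k ℓ : ℕ} (Tr : MGSTournament T k ℓ)
    (hreg : Tr.Regular)
    (hcond : ∀ V : ResultSet T, Tr.Complete V → ∀ i : Fin k, ∀ j : Fin ℓ,
      (∃ x ∈ Tr.X i, x ∈ Tr.Y V j) → ∀ y ∈ Tr.X i, y ∈ Tr.Y V j) :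
    Tr.StrategyProof := by
  rintro x ⟨V, V', hV, hV', hother, hworse, j, hxY, hxY', hcon⟩
  obtain ⟨ha, -, -, -, hc, hd, -⟩ := hreg V hV
  obtain ⟨ha', -, -, -, hc', hd', -⟩ := hreg V' hV'
  obtain ⟨i, hxX⟩ := ha j x hxY
  have hsub : ∀ y ∈ Tr.X i, y ∈ Tr.Y V j := hcond V hV i j ⟨x, hxX, hxY⟩
  have hsub' : ∀ y ∈ Tr.X i, y ∈ Tr.Y V' j := hcond V' hV' i j ⟨x, hxX, hxY'⟩
  obtain ⟨hp, hg⟩ := carryKey Tr V i j x (ha j) (fun i' => hc i' j)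
    (fun i' h' hne => hd i' h' hne j) hsub hxX
  obtain ⟨hp', hg'⟩ := carryKey Tr V' i j x (ha' j) (fun i' => hc' i' j)
    (fun i' h' hne => hd' i' h' hne j) hsub' hxX
  rw [hp, hg, hp', hg'] at hcon
  have hres : ∀ y ∈ Tr.X i, y ≠ x →
      ∃ p q : ℕ, p ≠ q ∧ V x y = some (p, q) ∧ V y x = some (q, p) :=
    fun y hy hne => hV.1 i x hxX y hy hne.symm
  have hres' : ∀ y ∈ Tr.X i, y ≠ x →
      ∃ p q : ℕ, p ≠ q ∧ V' x y = some (p, q) ∧ V' y x = some (q, p) :=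
    fun y hy hne => hV'.1 i x hxX y hy hne.symm
  have hwle : winsIn V' (Tr.X i) x ≤ winsIn V (Tr.X i) x := by
    apply Finset.card_le_card
    intro y hy
    simp only [Finset.mem_filter] at hy ⊢
    obtain ⟨hyX, hne, hb⟩ := hy
    obtain ⟨p, q, hpq, h1, h2⟩ := hres y hyX hne
    obtain ⟨p', q', hpq', h1', h2'⟩ := hres' y hyX hne
    obtain ⟨hpp, hqq⟩ := hworse y p q p' q' h1 h1'
    have hlt : q' < p' := by unfold beats at hb; rw [h1'] at hb; simpa using hb
    refine ⟨hyX, hne, ?_⟩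
    unfold beats; rw [h1]; simp; omega
  have hlle : lossesIn V (Tr.X i) x ≤ lossesIn V' (Tr.X i) x := by
    apply Finset.card_le_card
    intro y hy
    simp only [Finset.mem_filter] at hy ⊢
    obtain ⟨hyX, hne, hb⟩ := hy
    obtain ⟨p, q, hpq, h1, h2⟩ := hres y hyX hne
    obtain ⟨p', q', hpq', h1', h2'⟩ := hres' y hyX hne
    obtain ⟨hpp, hqq⟩ := hworse y p q p' q' h1 h1'
    have hlt : p < q := by unfold beats at hb; rw [h2] at hb; simpa using hb
    refine ⟨hyX, hne, ?_⟩
    unfold beats; rw [h2']; simp; omega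
  have hsum : winsIn V (Tr.X i) x + lossesIn V (Tr.X i) x =
      winsIn V' (Tr.X i) x + lossesIn V' (Tr.X i) x := by
    rw [winsIn_add_lossesIn hres, winsIn_add_lossesIn hres']
  have hple : pointsIn Tr.α Tr.β V' (Tr.X i) x ≤ pointsIn Tr.α Tr.β V (Tr.X i) x := by
    unfold pointsIn
    have h1 : (winsIn V' (Tr.X i) x : ℤ) ≤ winsIn V (Tr.X i) x := by exact_mod_cast hwle
    have h2 : (lossesIn V (Tr.X i) x : ℤ) ≤ lossesIn V' (Tr.X i) x := by exact_mod_cast hlle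
    have h3 : (winsIn V (Tr.X i) x : ℤ) + lossesIn V (Tr.X i) x =
        (winsIn V' (Tr.X i) x : ℤ) + lossesIn V' (Tr.X i) x := by exact_mod_cast hsum
    have key : Tr.β * ((winsIn V (Tr.X i) x : ℤ) - winsIn V' (Tr.X i) x) ≤
        Tr.α * ((winsIn V (Tr.X i) x : ℤ) - winsIn V' (Tr.X i) x) :=
      mul_le_mul_of_nonneg_right Tr.hαβ.le (sub_nonneg.2 h1)
    have key2 : Tr.β * ((lossesIn V' (Tr.X i) x : ℤ) - lossesIn V (Tr.X i) x) =
        Tr.β * ((winsIn V (Tr.X i) x : ℤ) - winsIn V' (Tr.X i) x) := by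
      rw [show ((lossesIn V' (Tr.X i) x : ℤ) - lossesIn V (Tr.X i) x) =
        ((winsIn V (Tr.X i) x : ℤ) - winsIn V' (Tr.X i) x) from by linarith]
    nlinarith [key, key2]
  have hgle : gdIn V' (Tr.X i) x ≤ gdIn V (Tr.X i) x := by
    unfold gdIn
    apply Finset.sum_le_sum
    intro y hy
    simp only [Finset.mem_filter] at hy
    obtain ⟨p, q, hpq, h1, h2⟩ := hres y hy.1 hy.2
    obtain ⟨p', q', hpq', h1', h2'⟩ := hres' y hy.1 hy.2
    obtain ⟨hpp, hqq⟩ := hworse y p q p' q' h1 h1'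
    simp only [goalDiff, h1, h1']
    omega
  rcases hcon with h | ⟨-, hg2⟩
  · exact absurd h (not_lt.2 hple)
  · exact absurd hg2 (not_lt.2 hgle)
end

section
/- Let (P, M, Q) be a regular tournament with multiple group stages such that, under every complete set of preliminary-round results, exactly one team qualifies to the main round from each preliminary-round group. Then no two teams from the same preliminary-round group ever belong to the same main-round group, and the tournament is strategy-proof. -/
/-!
Tournaments with multiple group stages (Csató).  A (possibly partial) set of
results assigns to each ordered pair of distinct teams either the pair of goals
scored by the two teams in their match, or `none` (= ⊗, match not yet played).
-/

open Finset

/-- If, under every complete set of preliminary-round results, exactly one team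
qualifies to the main round from each preliminary-round group of a regular
tournament with multiple group stages, then no two teams from the same
preliminary-round group ever belong to the same main-round group, and the
tournament is strategy-proof. -/
theorem strategyProof_of_one_qualifier_per_group
    {T : Type*} [DecidableEq T] {k ℓ : ℕ} (Tr : MGSTournament T k ℓ)
    (hreg : Tr.Regular)
    (hcond : ∀ V : ResultSet T, Tr.Complete V → ∀ i : Fin k,
      ∃! x : T, x ∈ Tr.X i ∧ Tr.Qualified V x) :
    (∀ V : ResultSet T, Tr.Complete V → ∀ i : Fin k, ∀ j : Fin ℓ,
      ∀ x ∈ Tr.X i, ∀ y ∈ Tr.X i, x ≠ y → ¬(x ∈ Tr.Y V j ∧ y ∈ Tr.Y V j)) ∧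
    Tr.StrategyProof := by
  have part1 : ∀ V : ResultSet T, Tr.Complete V → ∀ i : Fin k, ∀ j : Fin ℓ,
      ∀ x ∈ Tr.X i, ∀ y ∈ Tr.X i, x ≠ y → ¬(x ∈ Tr.Y V j ∧ y ∈ Tr.Y V j) := by
    rintro V hV i j x hx y hy hxy ⟨hxj, hyj⟩
    obtain ⟨z, _, huniq⟩ := hcond V hV i
    exact hxy ((huniq x ⟨hx, j, hxj⟩).trans (huniq y ⟨hy, j, hyj⟩).symm)
  refine ⟨part1, ?_⟩
  rintro x ⟨V, V', hV, hV', _, _, j, hxV, hxV', hman⟩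
  have key : ∀ (U : ResultSet T), Tr.Complete U → ∀ j : Fin ℓ, ∀ a ∈ Tr.Y U j,
      ∀ b ∈ Tr.Y U j, b ≠ a → Tr.W U a b = none := by
    intro U hU j a haj b hbj hba
    obtain ⟨ha, _, _, _, _, hd, _⟩ := hreg U hU
    obtain ⟨i, hai⟩ := ha j a haj
    obtain ⟨h, hbh⟩ := ha j b hbj
    have hih : i ≠ h := by
      rintro rfl
      exact part1 U hU i j a hai b hbh (Ne.symm hba) ⟨haj, hbj⟩
    exact hd i h hih j a hai b hbh haj hbj
  have zeroes : ∀ (U : ResultSet T), Tr.Complete U → ∀ j : Fin ℓ, x ∈ Tr.Y U j →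
      pointsIn Tr.α Tr.β (Tr.W U) (Tr.Y U j) x = 0 ∧ gdIn (Tr.W U) (Tr.Y U j) x = 0 := by
    intro U hU j hxj
    have hw : winsIn (Tr.W U) (Tr.Y U j) x = 0 := by
      simp only [winsIn, Finset.card_eq_zero, Finset.filter_eq_empty_iff]
      rintro y hy ⟨hyx, hb⟩
      have := key U hU j x hxj y hy hyx
      simp [beats, this] at hb
    have hl : lossesIn (Tr.W U) (Tr.Y U j) x = 0 := by
      simp only [lossesIn, Finset.card_eq_zero, Finset.filter_eq_empty_iff]
      rintro y hy ⟨hyx, hb⟩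
      have := key U hU j y hy x hxj (Ne.symm hyx)
      simp [beats, this] at hb
    have hg : gdIn (Tr.W U) (Tr.Y U j) x = 0 := by
      apply Finset.sum_eq_zero
      intro y hy
      simp only [Finset.mem_filter] at hy
      simp [goalDiff, key U hU j x hxj y hy.1 hy.2]
    exact ⟨by simp [pointsIn, hw, hl], hg⟩
  obtain ⟨hp, hg⟩ := zeroes V hV j hxV
  obtain ⟨hp', hg'⟩ := zeroes V' hV' j hxV'
  rw [hp, hg, hp', hg'] at hman
  omega
end

section
/- Consider a regular tournament with multiple group stages in the format of the 2014 European Men's Handball Championship: k = 4 pairwise-disjoint single round-robin preliminary groups of 4 teams each, ranked by a common monotonic ranking method, from each of which the top three teams qualify; ℓ = 2 main-round groups of 6 teams, each formed from the qualifiers of two fixed preliminary groups, where every match played in the preliminary round between two teams assigned to the same main-round group is carried over and the main-round groups are ranked by a common monotonic ranking method. This tournament is not strategy-proof: there exist a complete set of preliminary-round results and a team that can manipulate. -/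
/-!
Tournaments with multiple group stages (Csató).  A (possibly partial) set of
results assigns to each ordered pair of distinct teams either the pair of goals
scored by the two teams in their match, or `none` (= ⊗, match not yet played).
-/

open Finset

/-! ### Auxiliary material for the proof of Example 3.2 -/

namespace EHFAux

variable {T : Type*} [DecidableEq T]

/-- Index of a team among four designated teams. -/
def idx (a b c d x : T) : ℕ :=
  if x = a then 0 else if x = b then 1 else if x = c then 2 else if x = d then 3 else 4

theorem idx_a (a b c d : T) : idx a b c d a = 0 := by simp [idx]

theorem idx_b (a b c d : T) (h : b ≠ a) : idx a b c d b = 1 := by simp [idx, h]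

theorem idx_c (a b c d : T) (h1 : c ≠ a) (h2 : c ≠ b) : idx a b c d c = 2 := by
  simp [idx, h1, h2]

theorem idx_d (a b c d : T) (h1 : d ≠ a) (h2 : d ≠ b) (h3 : d ≠ c) : idx a b c d d = 3 := by
  simp [idx, h1, h2, h3]

theorem idx_ne_zero (a b c d x : T) (h : x ≠ a) : idx a b c d x ≠ 0 := by
  unfold idx
  rw [if_neg h]
  split_ifs <;> simp

/-- The results of the matches inside the group of the manipulating team, by indices:
team `0` beats team `1` 27:0, team `1` beats team `2` 9:0, and team `3` beats
everybody, while all remaining matches end 1:0. -/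
def mat (i j : ℕ) : Option (ℕ × ℕ) :=
  if i = 0 ∧ j = 1 then some (27, 0) else if i = 1 ∧ j = 0 then some (0, 27)
  else if i = 0 ∧ j = 2 then some (0, 1) else if i = 2 ∧ j = 0 then some (1, 0)
  else if i = 0 ∧ j = 3 then some (0, 1) else if i = 3 ∧ j = 0 then some (1, 0)
  else if i = 1 ∧ j = 2 then some (9, 0) else if i = 2 ∧ j = 1 then some (0, 9)
  else if i = 1 ∧ j = 3 then some (0, 1) else if i = 3 ∧ j = 1 then some (1, 0)
  else if i = 2 ∧ j = 3 then some (0, 1) else if i = 3 ∧ j = 2 then some (1, 0)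
  else none

/-- Results after the manipulation: team `0` beats team `1` only 1:0. -/
def mat' (i j : ℕ) : Option (ℕ × ℕ) :=
  if i = 0 ∧ j = 1 then some (1, 0) else if i = 1 ∧ j = 0 then some (0, 1)
  else mat i j

theorem mat_diag (n : ℕ) : mat n n = none := by
  rcases n with _ | _ | _ | _ | n
  · decide
  · decide
  · decide
  · decide
  · simp [mat]

theorem mat'_diag (n : ℕ) : mat' n n = none := by
  rcases n with _ | _ | _ | _ | n
  · decide
  · decide
  · decide
  · decide
  · simp [mat', mat]

theorem mat'_eq_mat (i j : ℕ) (h1 : ¬(i = 0 ∧ j = 1)) (h2 : ¬(i = 1 ∧ j = 0)) :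
    mat' i j = mat i j := by
  unfold mat'; rw [if_neg h1, if_neg h2]

theorem mat01 : mat 0 1 = some (27, 0) := by decide
theorem mat10 : mat 1 0 = some (0, 27) := by decide
theorem mat02 : mat 0 2 = some (0, 1) := by decide
theorem mat20 : mat 2 0 = some (1, 0) := by decide
theorem mat03 : mat 0 3 = some (0, 1) := by decide
theorem mat30 : mat 3 0 = some (1, 0) := by decide
theorem mat12 : mat 1 2 = some (9, 0) := by decide
theorem mat21 : mat 2 1 = some (0, 9) := by decide
theorem mat13 : mat 1 3 = some (0, 1) := by decide
theorem mat31 : mat 3 1 = some (1, 0) := by decide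
theorem mat23 : mat 2 3 = some (0, 1) := by decide
theorem mat32 : mat 3 2 = some (1, 0) := by decide

theorem mat'01 : mat' 0 1 = some (1, 0) := by decide
theorem mat'10 : mat' 1 0 = some (0, 1) := by decide
theorem mat'02 : mat' 0 2 = some (0, 1) := by decide
theorem mat'20 : mat' 2 0 = some (1, 0) := by decide
theorem mat'03 : mat' 0 3 = some (0, 1) := by decide
theorem mat'30 : mat' 3 0 = some (1, 0) := by decide
theorem mat'12 : mat' 1 2 = some (9, 0) := by decide
theorem mat'21 : mat' 2 1 = some (0, 9) := by decide
theorem mat'13 : mat' 1 3 = some (0, 1) := by decide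
theorem mat'31 : mat' 3 1 = some (1, 0) := by decide
theorem mat'23 : mat' 2 3 = some (0, 1) := by decide
theorem mat'32 : mat' 3 2 = some (1, 0) := by decide

/-- The honest results among the four teams of the first group. -/
def tV (a b c d x y : T) : Option (ℕ × ℕ) := mat (idx a b c d x) (idx a b c d y)

/-- The manipulated results among the four teams of the first group. -/
def tV' (a b c d x y : T) : Option (ℕ × ℕ) := mat' (idx a b c d x) (idx a b c d y)

open Classical in
/-- A complete set of preliminary results: inside the first group the results are
given by the table `t`; inside any other group the better team with respect to a
fixed well-ordering wins 1:0; any other match is not played. -/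
noncomputable def fullRes (X : Fin 4 → Finset T) (G : Finset T)
    (t : T → T → Option (ℕ × ℕ)) : ResultSet T := fun x y =>
  if x ∈ G ∧ y ∈ G then t x y
  else if x ≠ y ∧ ∃ i, x ∈ X i ∧ y ∈ X i then
    if WellOrderingRel x y then some (1, 0) else some (0, 1)
  else none

theorem fullRes_in {X : Fin 4 → Finset T} {G : Finset T} {t : T → T → Option (ℕ × ℕ)}
    {x y : T} (hx : x ∈ G) (hy : y ∈ G) : fullRes X G t x y = t x y := by
  unfold fullRes; rw [if_pos ⟨hx, hy⟩]

theorem complete_fullRes (Tr : MGSTournament T 4 2) (t : T → T → Option (ℕ × ℕ))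
    (hdiag : ∀ x, t x x = none)
    (hspec : ∀ x ∈ Tr.X 0, ∀ y ∈ Tr.X 0, x ≠ y →
      ∃ p q : ℕ, p ≠ q ∧ t x y = some (p, q) ∧ t y x = some (q, p)) :
    Tr.Complete (fullRes Tr.X (Tr.X 0) t) := by
  have wf : WellFounded (@WellOrderingRel T) := IsWellFounded.wf
  constructor
  · intro i x hx y hy hxy
    by_cases hi : i = 0
    · subst hi
      obtain ⟨p, q, hpq, h1, h2⟩ := hspec x hx y hy hxy
      refine ⟨p, q, hpq, ?_, ?_⟩
      · rw [fullRes_in hx hy]; exact h1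
      · rw [fullRes_in hy hx]; exact h2
    · have hx0 : ¬(x ∈ Tr.X 0) := fun h => Finset.disjoint_left.mp (Tr.Xdisj i 0 hi) hx h
      have hy0 : ¬(y ∈ Tr.X 0) := fun h => Finset.disjoint_left.mp (Tr.Xdisj i 0 hi) hy h
      rcases trichotomous_of WellOrderingRel x y with h | h | h
      · refine ⟨1, 0, by norm_num, ?_, ?_⟩
        · unfold fullRes
          rw [if_neg (fun hc => hx0 hc.1), if_pos ⟨hxy, i, hx, hy⟩, if_pos h]
        · unfold fullRes
          rw [if_neg (fun hc => hy0 hc.1), if_pos ⟨hxy.symm, i, hy, hx⟩,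
            if_neg (wf.asymmetric x y h)]
      · exact absurd h hxy
      · refine ⟨0, 1, by norm_num, ?_, ?_⟩
        · unfold fullRes
          rw [if_neg (fun hc => hx0 hc.1), if_pos ⟨hxy, i, hx, hy⟩,
            if_neg (wf.asymmetric y x h)]
        · unfold fullRes
          rw [if_neg (fun hc => hy0 hc.1), if_pos ⟨hxy.symm, i, hy, hx⟩, if_pos h]
  · intro x y h
    by_cases hxy : x ∈ Tr.X 0 ∧ y ∈ Tr.X 0
    · have hx : x = y := by
        by_contra hne
        exact h 0 ⟨hxy.1, hxy.2, hne⟩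
      rw [fullRes_in hxy.1 hxy.2, hx, hdiag]
    · have hno : ¬(x ≠ y ∧ ∃ i, x ∈ Tr.X i ∧ y ∈ Tr.X i) := by
        rintro ⟨hne, i, hxi, hyi⟩
        exact h i ⟨hxi, hyi, hne⟩
      unfold fullRes
      rw [if_neg hxy, if_neg hno]

theorem exists_quad {s : Finset T} (h : s.card = 4) :
    ∃ a b c d : T, a ≠ b ∧ a ≠ c ∧ a ≠ d ∧ b ≠ c ∧ b ≠ d ∧ c ≠ d ∧ s = {a, b, c, d} := by
  obtain ⟨a, t, hat, rfl, ht⟩ := Finset.card_eq_succ.mp h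
  obtain ⟨b, c, d, hbc, hbd, hcd, rfl⟩ := Finset.card_eq_three.mp ht
  exact ⟨a, b, c, d, fun h => hat (by subst h; simp), fun h => hat (by subst h; simp),
    fun h => hat (by subst h; simp), hbc, hbd, hcd, rfl⟩

theorem sum_quad {M : Type*} [AddCommMonoid M] (f : T → M) (a b c d : T)
    (hab : a ≠ b) (hac : a ≠ c) (had : a ≠ d) (hbc : b ≠ c) (hbd : b ≠ d) (hcd : c ≠ d) :
    ∑ x ∈ ({a, b, c, d} : Finset T), f x = f a + (f b + (f c + f d)) := by
  rw [Finset.sum_insert (by simp [hab, hac, had]), Finset.sum_insert (by simp [hbc, hbd]),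
    Finset.sum_insert (by simp [hcd]), Finset.sum_singleton]

theorem sum_tri {M : Type*} [AddCommMonoid M] (f : T → M) (a b c : T)
    (hab : a ≠ b) (hac : a ≠ c) (hbc : b ≠ c) :
    ∑ x ∈ ({a, b, c} : Finset T), f x = f a + (f b + f c) := by
  rw [Finset.sum_insert (by simp [hab, hac]), Finset.sum_insert (by simp [hbc]),
    Finset.sum_singleton]

end EHFAux
namespace EHFAux

/-- All the relevant quantities for a group `{a, b, c, d}` whose internal results are:
`a` beats `b` by `m:0`, `b` beats `c` by `9:0`, and `c` beats `a`, `d` beats `a`,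
`d` beats `b`, `d` beats `c`, each by `1:0`. -/
theorem eval_all {T : Type*} [DecidableEq T] (α β : ℤ) (V : ResultSet T) (a b c d : T)
    (m : ℕ) (hαβ : β < α) (hm : 0 < m)
    (hab : a ≠ b) (hac : a ≠ c) (had : a ≠ d) (hbc : b ≠ c) (hbd : b ≠ d) (hcd : c ≠ d)
    (vab : V a b = some (m, 0)) (vba : V b a = some (0, m))
    (vac : V a c = some (0, 1)) (vca : V c a = some (1, 0))
    (vad : V a d = some (0, 1)) (vda : V d a = some (1, 0))
    (vbc : V b c = some (9, 0)) (vcb : V c b = some (0, 9))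
    (vbd : V b d = some (0, 1)) (vdb : V d b = some (1, 0))
    (vcd : V c d = some (0, 1)) (vdc : V d c = some (1, 0)) :
    pointsIn α β V {a, b, c, d} a = α + 2 * β ∧
    pointsIn α β V {a, b, c, d} b = α + 2 * β ∧
    pointsIn α β V {a, b, c, d} c = α + 2 * β ∧
    pointsIn α β V {a, b, c, d} d = 3 * α ∧
    gdIn V {a, b, c, d} a = (m : ℤ) - 2 ∧
    gdIn V {a, b, c, d} b = 8 - (m : ℤ) ∧
    gdIn V {a, b, c, d} c = -9 ∧
    tiedIn α β V {a, b, c, d} a = {a, b, c} ∧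
    tiedIn α β V {a, b, c, d} b = {a, b, c} ∧
    tiedIn α β V {a, b, c, d} c = {a, b, c} ∧
    pointsIn α β V {a, b, c} a = α + β ∧
    pointsIn α β V {a, b, c} b = α + β ∧
    pointsIn α β V {a, b, c} c = α + β ∧
    gdIn V {a, b, c} a = (m : ℤ) - 1 ∧
    gdIn V {a, b, c} b = 9 - (m : ℤ) ∧
    gdIn V {a, b, c} c = -8 := by
  have hba := hab.symm
  have hca := hac.symm
  have hda := had.symm
  have hcb := hbc.symm
  have hdb := hbd.symm
  have hdc := hcd.symm
  -- who beats whom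
  have Bab : beats V a b = true := by simp [beats, vab, hm]
  have Bba : beats V b a = false := by simp [beats, vba]
  have Bac : beats V a c = false := by simp [beats, vac]
  have Bca : beats V c a = true := by simp [beats, vca]
  have Bad : beats V a d = false := by simp [beats, vad]
  have Bda : beats V d a = true := by simp [beats, vda]
  have Bbc : beats V b c = true := by simp [beats, vbc]
  have Bcb : beats V c b = false := by simp [beats, vcb]
  have Bbd : beats V b d = false := by simp [beats, vbd]
  have Bdb : beats V d b = true := by simp [beats, vdb]
  have Bcd : beats V c d = false := by simp [beats, vcd]
  have Bdc : beats V d c = true := by simp [beats, vdc]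
  -- goal differences of single matches
  have Dab : goalDiff V a b = (m : ℤ) := by simp [goalDiff, vab]
  have Dba : goalDiff V b a = -(m : ℤ) := by simp [goalDiff, vba]
  have Dac : goalDiff V a c = -1 := by simp [goalDiff, vac]
  have Dca : goalDiff V c a = 1 := by simp [goalDiff, vca]
  have Dad : goalDiff V a d = -1 := by simp [goalDiff, vad]
  have Dda : goalDiff V d a = 1 := by simp [goalDiff, vda]
  have Dbc : goalDiff V b c = 9 := by simp [goalDiff, vbc]
  have Dcb : goalDiff V c b = -9 := by simp [goalDiff, vcb]
  have Dbd : goalDiff V b d = -1 := by simp [goalDiff, vbd]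
  have Ddb : goalDiff V d b = 1 := by simp [goalDiff, vdb]
  have Dcd : goalDiff V c d = -1 := by simp [goalDiff, vcd]
  have Ddc : goalDiff V d c = 1 := by simp [goalDiff, vdc]
  -- wins and losses in the whole group
  have wq_a : winsIn V {a, b, c, d} a = 1 := by
    simp only [winsIn]
    rw [Finset.card_filter, sum_quad _ a b c d hab hac had hbc hbd hcd,
      if_neg (by simp), if_pos ⟨hba, Bab⟩, if_neg (by simp [Bac]), if_neg (by simp [Bad])]
    norm_num
  have wq_b : winsIn V {a, b, c, d} b = 1 := by
    simp only [winsIn]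
    rw [Finset.card_filter, sum_quad _ a b c d hab hac had hbc hbd hcd,
      if_neg (by simp [Bba]), if_neg (by simp), if_pos ⟨hcb, Bbc⟩, if_neg (by simp [Bbd])]
    norm_num
  have wq_c : winsIn V {a, b, c, d} c = 1 := by
    simp only [winsIn]
    rw [Finset.card_filter, sum_quad _ a b c d hab hac had hbc hbd hcd,
      if_pos ⟨hac, Bca⟩, if_neg (by simp [Bcb]), if_neg (by simp), if_neg (by simp [Bcd])]
    norm_num
  have wq_d : winsIn V {a, b, c, d} d = 3 := by
    simp only [winsIn]
    rw [Finset.card_filter, sum_quad _ a b c d hab hac had hbc hbd hcd,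
      if_pos ⟨had, Bda⟩, if_pos ⟨hbd, Bdb⟩, if_pos ⟨hcd, Bdc⟩, if_neg (by simp)]
    norm_num
  have lq_a : lossesIn V {a, b, c, d} a = 2 := by
    simp only [lossesIn]
    rw [Finset.card_filter, sum_quad _ a b c d hab hac had hbc hbd hcd,
      if_neg (by simp), if_neg (by simp [Bba]), if_pos ⟨hca, Bca⟩, if_pos ⟨hda, Bda⟩]
    norm_num
  have lq_b : lossesIn V {a, b, c, d} b = 2 := by
    simp only [lossesIn]
    rw [Finset.card_filter, sum_quad _ a b c d hab hac had hbc hbd hcd,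
      if_pos ⟨hab, Bab⟩, if_neg (by simp), if_neg (by simp [Bcb]), if_pos ⟨hdb, Bdb⟩]
    norm_num
  have lq_c : lossesIn V {a, b, c, d} c = 2 := by
    simp only [lossesIn]
    rw [Finset.card_filter, sum_quad _ a b c d hab hac had hbc hbd hcd,
      if_neg (by simp [Bac]), if_pos ⟨hbc, Bbc⟩, if_neg (by simp), if_pos ⟨hdc, Bdc⟩]
    norm_num
  have lq_d : lossesIn V {a, b, c, d} d = 0 := by
    simp only [lossesIn]
    rw [Finset.card_filter, sum_quad _ a b c d hab hac had hbc hbd hcd,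
      if_neg (by simp [Bad]), if_neg (by simp [Bbd]), if_neg (by simp [Bcd]), if_neg (by simp)]
    norm_num
  -- points in the whole group
  have pq_a : pointsIn α β V {a, b, c, d} a = α + 2 * β := by
    simp only [pointsIn, wq_a, lq_a]; push_cast; ring
  have pq_b : pointsIn α β V {a, b, c, d} b = α + 2 * β := by
    simp only [pointsIn, wq_b, lq_b]; push_cast; ring
  have pq_c : pointsIn α β V {a, b, c, d} c = α + 2 * β := by
    simp only [pointsIn, wq_c, lq_c]; push_cast; ring
  have pq_d : pointsIn α β V {a, b, c, d} d = 3 * α := by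
    simp only [pointsIn, wq_d, lq_d]; push_cast; ring
  -- goal differences in the whole group
  have gq_a : gdIn V {a, b, c, d} a = (m : ℤ) - 2 := by
    simp only [gdIn]
    rw [Finset.sum_filter, sum_quad _ a b c d hab hac had hbc hbd hcd,
      if_neg (by simp), if_pos hba, if_pos hca, if_pos hda, Dab, Dac, Dad]
    ring
  have gq_b : gdIn V {a, b, c, d} b = 8 - (m : ℤ) := by
    simp only [gdIn]
    rw [Finset.sum_filter, sum_quad _ a b c d hab hac had hbc hbd hcd,
      if_pos hab, if_neg (by simp), if_pos hcb, if_pos hdb, Dba, Dbc, Dbd]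
    ring
  have gq_c : gdIn V {a, b, c, d} c = -9 := by
    simp only [gdIn]
    rw [Finset.sum_filter, sum_quad _ a b c d hab hac had hbc hbd hcd,
      if_pos hac, if_pos hbc, if_neg (by simp), if_pos hdc, Dca, Dcb, Dcd]
    ring
  -- the tied set
  have tq_a : tiedIn α β V {a, b, c, d} a = {a, b, c} := by
    simp only [tiedIn]
    rw [Finset.filter_insert, if_pos rfl, Finset.filter_insert, if_pos (by rw [pq_b, pq_a]),
      Finset.filter_insert, if_pos (by rw [pq_c, pq_a]),
      Finset.filter_singleton, if_neg (by rw [pq_d, pq_a]; intro h; linarith)]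
    simp
  have tq_b : tiedIn α β V {a, b, c, d} b = {a, b, c} := by
    simp only [tiedIn]
    rw [Finset.filter_insert, if_pos (by rw [pq_a, pq_b]), Finset.filter_insert, if_pos rfl,
      Finset.filter_insert, if_pos (by rw [pq_c, pq_b]),
      Finset.filter_singleton, if_neg (by rw [pq_d, pq_b]; intro h; linarith)]
    simp
  have tq_c : tiedIn α β V {a, b, c, d} c = {a, b, c} := by
    simp only [tiedIn]
    rw [Finset.filter_insert, if_pos (by rw [pq_a, pq_c]), Finset.filter_insert,
      if_pos (by rw [pq_b, pq_c]), Finset.filter_insert, if_pos rfl,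
      Finset.filter_singleton, if_neg (by rw [pq_d, pq_c]; intro h; linarith)]
    simp
  -- wins and losses among the tied teams
  have wt_a : winsIn V {a, b, c} a = 1 := by
    simp only [winsIn]
    rw [Finset.card_filter, sum_tri _ a b c hab hac hbc,
      if_neg (by simp), if_pos ⟨hba, Bab⟩, if_neg (by simp [Bac])]
    norm_num
  have wt_b : winsIn V {a, b, c} b = 1 := by
    simp only [winsIn]
    rw [Finset.card_filter, sum_tri _ a b c hab hac hbc,
      if_neg (by simp [Bba]), if_neg (by simp), if_pos ⟨hcb, Bbc⟩]
    norm_num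
  have wt_c : winsIn V {a, b, c} c = 1 := by
    simp only [winsIn]
    rw [Finset.card_filter, sum_tri _ a b c hab hac hbc,
      if_pos ⟨hac, Bca⟩, if_neg (by simp [Bcb]), if_neg (by simp)]
    norm_num
  have lt_a : lossesIn V {a, b, c} a = 1 := by
    simp only [lossesIn]
    rw [Finset.card_filter, sum_tri _ a b c hab hac hbc,
      if_neg (by simp), if_neg (by simp [Bba]), if_pos ⟨hca, Bca⟩]
    norm_num
  have lt_b : lossesIn V {a, b, c} b = 1 := by
    simp only [lossesIn]
    rw [Finset.card_filter, sum_tri _ a b c hab hac hbc,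
      if_pos ⟨hab, Bab⟩, if_neg (by simp), if_neg (by simp [Bcb])]
    norm_num
  have lt_c : lossesIn V {a, b, c} c = 1 := by
    simp only [lossesIn]
    rw [Finset.card_filter, sum_tri _ a b c hab hac hbc,
      if_neg (by simp [Bac]), if_pos ⟨hbc, Bbc⟩, if_neg (by simp)]
    norm_num
  -- head-to-head points
  have pt_a : pointsIn α β V {a, b, c} a = α + β := by
    simp only [pointsIn, wt_a, lt_a]; push_cast; ring
  have pt_b : pointsIn α β V {a, b, c} b = α + β := by
    simp only [pointsIn, wt_b, lt_b]; push_cast; ring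
  have pt_c : pointsIn α β V {a, b, c} c = α + β := by
    simp only [pointsIn, wt_c, lt_c]; push_cast; ring
  -- head-to-head goal differences
  have gt_a : gdIn V {a, b, c} a = (m : ℤ) - 1 := by
    simp only [gdIn]
    rw [Finset.sum_filter, sum_tri _ a b c hab hac hbc,
      if_neg (by simp), if_pos hba, if_pos hca, Dab, Dac]
    ring
  have gt_b : gdIn V {a, b, c} b = 9 - (m : ℤ) := by
    simp only [gdIn]
    rw [Finset.sum_filter, sum_tri _ a b c hab hac hbc,
      if_pos hab, if_neg (by simp), if_pos hcb, Dba, Dbc]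
    ring
  have gt_c : gdIn V {a, b, c} c = -8 := by
    simp only [gdIn]
    rw [Finset.sum_filter, sum_tri _ a b c hab hac hbc,
      if_pos hac, if_pos hbc, if_neg (by simp), Dca, Dcb]
    ring
  exact ⟨pq_a, pq_b, pq_c, pq_d, gq_a, gq_b, gq_c, tq_a, tq_b, tq_c,
    pt_a, pt_b, pt_c, gt_a, gt_b, gt_c⟩

end EHFAux
/-- **Example 3.2.** A regular tournament with multiple group stages in the
format of the 2014 European Men's Handball Championship: `k = 4` pairwise
disjoint single round-robin preliminary groups of 4 teams each, ranked by a
common monotonic ranking method, from each of which the top three teams qualify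
(i.e. a team of a preliminary group qualifies iff at most two teams of its group
are ranked above it); `ℓ = 2` main-round groups of 6 teams, each formed from the
qualifiers of two fixed preliminary groups, with every preliminary-round match
between two teams assigned to the same main-round group carried over, and the
main-round groups ranked by a common monotonic ranking method.  This tournament
is not strategy-proof. -/
theorem ehf2014_not_strategyProof
    {T : Type*} [DecidableEq T] (Tr : MGSTournament T 4 2)
    (hreg : Tr.Regular)
    (hXcard : ∀ i : Fin 4, (Tr.X i).card = 4)
    (htop3 : ∀ V : ResultSet T, Tr.Complete V → ∀ i : Fin 4, ∀ x ∈ Tr.X i,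
      (Tr.Qualified V x ↔ {y : T | y ∈ Tr.X i ∧ Tr.R V y x}.ncard ≤ 2))
    (hY0 : ∀ V : ResultSet T, Tr.Complete V → ∀ x : T,
      x ∈ Tr.Y V 0 ↔ (x ∈ Tr.X 0 ∨ x ∈ Tr.X 1) ∧ Tr.Qualified V x)
    (hY1 : ∀ V : ResultSet T, Tr.Complete V → ∀ x : T,
      x ∈ Tr.Y V 1 ↔ (x ∈ Tr.X 2 ∨ x ∈ Tr.X 3) ∧ Tr.Qualified V x)
    (hYcard : ∀ V : ResultSet T, Tr.Complete V → ∀ j : Fin 2, (Tr.Y V j).card = 6) :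
    ¬Tr.StrategyProof := by
  intro hsp
  obtain ⟨a, b, c, d, hab, hac, had, hbc, hbd, hcd, hGeq⟩ := EHFAux.exists_quad (hXcard 0)
  have ha0 : a ∈ Tr.X 0 := by rw [hGeq]; simp
  have hb0 : b ∈ Tr.X 0 := by rw [hGeq]; simp
  have hc0 : c ∈ Tr.X 0 := by rw [hGeq]; simp
  have hd0 : d ∈ Tr.X 0 := by rw [hGeq]; simp
  have ia : EHFAux.idx a b c d a = 0 := EHFAux.idx_a a b c d
  have ib : EHFAux.idx a b c d b = 1 := EHFAux.idx_b a b c d hab.symm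
  have ic : EHFAux.idx a b c d c = 2 := EHFAux.idx_c a b c d hac.symm hbc.symm
  have id4 : EHFAux.idx a b c d d = 3 := EHFAux.idx_d a b c d had.symm hbd.symm hcd.symm
  -- the values of the honest table
  have tvaa : EHFAux.tV a b c d a a = none := by
    unfold EHFAux.tV; rw [ia]; exact EHFAux.mat_diag 0
  have tvab : EHFAux.tV a b c d a b = some (27, 0) := by
    unfold EHFAux.tV; rw [ia, ib]; exact EHFAux.mat01
  have tvba : EHFAux.tV a b c d b a = some (0, 27) := by
    unfold EHFAux.tV; rw [ia, ib]; exact EHFAux.mat10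
  have tvac : EHFAux.tV a b c d a c = some (0, 1) := by
    unfold EHFAux.tV; rw [ia, ic]; exact EHFAux.mat02
  have tvca : EHFAux.tV a b c d c a = some (1, 0) := by
    unfold EHFAux.tV; rw [ia, ic]; exact EHFAux.mat20
  have tvad : EHFAux.tV a b c d a d = some (0, 1) := by
    unfold EHFAux.tV; rw [ia, id4]; exact EHFAux.mat03
  have tvda : EHFAux.tV a b c d d a = some (1, 0) := by
    unfold EHFAux.tV; rw [ia, id4]; exact EHFAux.mat30
  have tvbc : EHFAux.tV a b c d b c = some (9, 0) := by
    unfold EHFAux.tV; rw [ib, ic]; exact EHFAux.mat12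
  have tvcb : EHFAux.tV a b c d c b = some (0, 9) := by
    unfold EHFAux.tV; rw [ib, ic]; exact EHFAux.mat21
  have tvbd : EHFAux.tV a b c d b d = some (0, 1) := by
    unfold EHFAux.tV; rw [ib, id4]; exact EHFAux.mat13
  have tvdb : EHFAux.tV a b c d d b = some (1, 0) := by
    unfold EHFAux.tV; rw [ib, id4]; exact EHFAux.mat31
  have tvcd : EHFAux.tV a b c d c d = some (0, 1) := by
    unfold EHFAux.tV; rw [ic, id4]; exact EHFAux.mat23
  have tvdc : EHFAux.tV a b c d d c = some (1, 0) := by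
    unfold EHFAux.tV; rw [ic, id4]; exact EHFAux.mat32
  -- the values of the manipulated table
  have twab : EHFAux.tV' a b c d a b = some (1, 0) := by
    unfold EHFAux.tV'; rw [ia, ib]; exact EHFAux.mat'01
  have twba : EHFAux.tV' a b c d b a = some (0, 1) := by
    unfold EHFAux.tV'; rw [ia, ib]; exact EHFAux.mat'10
  have twac : EHFAux.tV' a b c d a c = some (0, 1) := by
    unfold EHFAux.tV'; rw [ia, ic]; exact EHFAux.mat'02
  have twca : EHFAux.tV' a b c d c a = some (1, 0) := by
    unfold EHFAux.tV'; rw [ia, ic]; exact EHFAux.mat'20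
  have twad : EHFAux.tV' a b c d a d = some (0, 1) := by
    unfold EHFAux.tV'; rw [ia, id4]; exact EHFAux.mat'03
  have twda : EHFAux.tV' a b c d d a = some (1, 0) := by
    unfold EHFAux.tV'; rw [ia, id4]; exact EHFAux.mat'30
  have twbc : EHFAux.tV' a b c d b c = some (9, 0) := by
    unfold EHFAux.tV'; rw [ib, ic]; exact EHFAux.mat'12
  have twcb : EHFAux.tV' a b c d c b = some (0, 9) := by
    unfold EHFAux.tV'; rw [ib, ic]; exact EHFAux.mat'21
  have twbd : EHFAux.tV' a b c d b d = some (0, 1) := by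
    unfold EHFAux.tV'; rw [ib, id4]; exact EHFAux.mat'13
  have twdb : EHFAux.tV' a b c d d b = some (1, 0) := by
    unfold EHFAux.tV'; rw [ib, id4]; exact EHFAux.mat'31
  have twcd : EHFAux.tV' a b c d c d = some (0, 1) := by
    unfold EHFAux.tV'; rw [ic, id4]; exact EHFAux.mat'23
  have twdc : EHFAux.tV' a b c d d c = some (1, 0) := by
    unfold EHFAux.tV'; rw [ic, id4]; exact EHFAux.mat'32
  -- the two result sets
  set V : ResultSet T := EHFAux.fullRes Tr.X (Tr.X 0) (EHFAux.tV a b c d) with hVdef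
  set V' : ResultSet T := EHFAux.fullRes Tr.X (Tr.X 0) (EHFAux.tV' a b c d) with hWdef
  have vaa : V a a = none := by rw [hVdef, EHFAux.fullRes_in ha0 ha0]; exact tvaa
  have vab : V a b = some (27, 0) := by rw [hVdef, EHFAux.fullRes_in ha0 hb0]; exact tvab
  have vba : V b a = some (0, 27) := by rw [hVdef, EHFAux.fullRes_in hb0 ha0]; exact tvba
  have vac : V a c = some (0, 1) := by rw [hVdef, EHFAux.fullRes_in ha0 hc0]; exact tvac
  have vca : V c a = some (1, 0) := by rw [hVdef, EHFAux.fullRes_in hc0 ha0]; exact tvca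
  have vad : V a d = some (0, 1) := by rw [hVdef, EHFAux.fullRes_in ha0 hd0]; exact tvad
  have vda : V d a = some (1, 0) := by rw [hVdef, EHFAux.fullRes_in hd0 ha0]; exact tvda
  have vbc : V b c = some (9, 0) := by rw [hVdef, EHFAux.fullRes_in hb0 hc0]; exact tvbc
  have vcb : V c b = some (0, 9) := by rw [hVdef, EHFAux.fullRes_in hc0 hb0]; exact tvcb
  have vbd : V b d = some (0, 1) := by rw [hVdef, EHFAux.fullRes_in hb0 hd0]; exact tvbd
  have vdb : V d b = some (1, 0) := by rw [hVdef, EHFAux.fullRes_in hd0 hb0]; exact tvdb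
  have vcd : V c d = some (0, 1) := by rw [hVdef, EHFAux.fullRes_in hc0 hd0]; exact tvcd
  have vdc : V d c = some (1, 0) := by rw [hVdef, EHFAux.fullRes_in hd0 hc0]; exact tvdc
  have wab : V' a b = some (1, 0) := by rw [hWdef, EHFAux.fullRes_in ha0 hb0]; exact twab
  have wba : V' b a = some (0, 1) := by rw [hWdef, EHFAux.fullRes_in hb0 ha0]; exact twba
  have wac : V' a c = some (0, 1) := by rw [hWdef, EHFAux.fullRes_in ha0 hc0]; exact twac
  have wca : V' c a = some (1, 0) := by rw [hWdef, EHFAux.fullRes_in hc0 ha0]; exact twca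
  have wad : V' a d = some (0, 1) := by rw [hWdef, EHFAux.fullRes_in ha0 hd0]; exact twad
  have wda : V' d a = some (1, 0) := by rw [hWdef, EHFAux.fullRes_in hd0 ha0]; exact twda
  have wbc : V' b c = some (9, 0) := by rw [hWdef, EHFAux.fullRes_in hb0 hc0]; exact twbc
  have wcb : V' c b = some (0, 9) := by rw [hWdef, EHFAux.fullRes_in hc0 hb0]; exact twcb
  have wbd : V' b d = some (0, 1) := by rw [hWdef, EHFAux.fullRes_in hb0 hd0]; exact twbd
  have wdb : V' d b = some (1, 0) := by rw [hWdef, EHFAux.fullRes_in hd0 hb0]; exact twdb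
  have wcd : V' c d = some (0, 1) := by rw [hWdef, EHFAux.fullRes_in hc0 hd0]; exact twcd
  have wdc : V' d c = some (1, 0) := by rw [hWdef, EHFAux.fullRes_in hd0 hc0]; exact twdc
  -- completeness
  have hCV : Tr.Complete V := by
    rw [hVdef]
    refine EHFAux.complete_fullRes Tr _ (fun x => ?_) ?_
    · unfold EHFAux.tV; exact EHFAux.mat_diag _
    · intro x hx y hy hxy
      have hx' : x = a ∨ x = b ∨ x = c ∨ x = d := by rw [hGeq] at hx; simpa using hx
      have hy' : y = a ∨ y = b ∨ y = c ∨ y = d := by rw [hGeq] at hy; simpa using hy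
      rcases hx' with rfl | rfl | rfl | rfl <;> rcases hy' with rfl | rfl | rfl | rfl <;>
        first
          | exact absurd rfl hxy
          | exact ⟨27, 0, by norm_num, tvab, tvba⟩
          | exact ⟨0, 27, by norm_num, tvba, tvab⟩
          | exact ⟨0, 1, by norm_num, tvac, tvca⟩
          | exact ⟨1, 0, by norm_num, tvca, tvac⟩
          | exact ⟨0, 1, by norm_num, tvad, tvda⟩
          | exact ⟨1, 0, by norm_num, tvda, tvad⟩
          | exact ⟨9, 0, by norm_num, tvbc, tvcb⟩
          | exact ⟨0, 9, by norm_num, tvcb, tvbc⟩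
          | exact ⟨0, 1, by norm_num, tvbd, tvdb⟩
          | exact ⟨1, 0, by norm_num, tvdb, tvbd⟩
          | exact ⟨0, 1, by norm_num, tvcd, tvdc⟩
          | exact ⟨1, 0, by norm_num, tvdc, tvcd⟩
  have hCW : Tr.Complete V' := by
    rw [hWdef]
    refine EHFAux.complete_fullRes Tr _ (fun x => ?_) ?_
    · unfold EHFAux.tV'; exact EHFAux.mat'_diag _
    · intro x hx y hy hxy
      have hx' : x = a ∨ x = b ∨ x = c ∨ x = d := by rw [hGeq] at hx; simpa using hx
      have hy' : y = a ∨ y = b ∨ y = c ∨ y = d := by rw [hGeq] at hy; simpa using hy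
      rcases hx' with rfl | rfl | rfl | rfl <;> rcases hy' with rfl | rfl | rfl | rfl <;>
        first
          | exact absurd rfl hxy
          | exact ⟨1, 0, by norm_num, twab, twba⟩
          | exact ⟨0, 1, by norm_num, twba, twab⟩
          | exact ⟨0, 1, by norm_num, twac, twca⟩
          | exact ⟨1, 0, by norm_num, twca, twac⟩
          | exact ⟨0, 1, by norm_num, twad, twda⟩
          | exact ⟨1, 0, by norm_num, twda, twad⟩
          | exact ⟨9, 0, by norm_num, twbc, twcb⟩
          | exact ⟨0, 9, by norm_num, twcb, twbc⟩
          | exact ⟨0, 1, by norm_num, twbd, twdb⟩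
          | exact ⟨1, 0, by norm_num, twdb, twbd⟩
          | exact ⟨0, 1, by norm_num, twcd, twdc⟩
          | exact ⟨1, 0, by norm_num, twdc, twcd⟩
  -- evaluation of the two rounds
  obtain ⟨pa, pb, pc, pd, ga, gb, gc, ta, tb, tc, qa, qb, qc, la, lb, lc⟩ :=
    EHFAux.eval_all Tr.α Tr.β V a b c d 27 Tr.hαβ (by norm_num) hab hac had hbc hbd hcd
      vab vba vac vca vad vda vbc vcb vbd vdb vcd vdc
  obtain ⟨pa', pb', pc', pd', ga', gb', gc', ta', tb', tc', qa', qb', qc', la', lb', lc'⟩ :=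
    EHFAux.eval_all Tr.α Tr.β V' a b c d 1 Tr.hαβ (by norm_num) hab hac had hbc hbd hcd
      wab wba wac wca wad wda wbc wcb wbd wdb wcd wdc
  -- the ranking of the honest round
  obtain ⟨-, -, hRm, -, hcarry, hcross, -⟩ := hreg V hCV
  have hMO := (hRm 0).2
  obtain ⟨hirr, htrans, -⟩ := (hRm 0).1
  have hRab : Tr.R V a b := by
    refine hMO.2 a ha0 b hb0 ?_ ?_ ?_
    · rw [hGeq, pa, pb]
    · rw [hGeq, ga, gb]; norm_num
    · unfold Dominates
      rw [hGeq, ta]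
      exact Or.inr ⟨by rw [qa, qb], by rw [la, lb]; norm_num⟩
  have hRcb : Tr.R V c b := by
    refine hMO.2 c hc0 b hb0 ?_ ?_ ?_
    · rw [hGeq, pc, pb]
    · rw [hGeq, gc, gb]; norm_num
    · unfold Dominates
      rw [hGeq, tc]
      exact Or.inr ⟨by rw [qc, qb], by rw [lc, lb]; norm_num⟩
  have hRdb : Tr.R V d b := by
    refine hMO.1 d hd0 b hb0 ?_
    rw [hGeq, pd, pb]
    linarith [Tr.hαβ]
  have hasym : ∀ x ∈ Tr.X 0, ∀ y ∈ Tr.X 0, Tr.R V x y → ¬Tr.R V y x := fun x hx y hy h1 h2 =>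
    hirr x hx (htrans x hx y hy x hx h1 h2)
  -- who qualifies after the honest round
  have hbnq : ¬Tr.Qualified V b := by
    rw [htop3 V hCV 0 b hb0]
    push_neg
    have hsub : (↑({a, c, d} : Finset T) : Set T) ⊆ {y : T | y ∈ Tr.X 0 ∧ Tr.R V y b} := by
      intro y hy
      simp only [Finset.coe_insert, Set.mem_insert_iff, Finset.coe_singleton,
        Set.mem_singleton_iff] at hy
      rcases hy with rfl | rfl | rfl
      · exact ⟨ha0, hRab⟩
      · exact ⟨hc0, hRcb⟩
      · exact ⟨hd0, hRdb⟩
    have e : (↑({a, c, d} : Finset T) : Set T).ncard = 3 := by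
      rw [Set.ncard_coe_finset, Finset.card_insert_of_notMem (by simp [hac, had]),
        Finset.card_insert_of_notMem (by simp [hcd]), Finset.card_singleton]
    have h2 := Set.ncard_le_ncard hsub
      (Set.Finite.subset (Tr.X 0).finite_toSet (fun y hy => hy.1))
    omega
  have hqual : ∀ x ∈ Tr.X 0, ∀ u v : T, ({y : T | y ∈ Tr.X 0 ∧ Tr.R V y x} ⊆
      (↑({u, v} : Finset T) : Set T)) → Tr.Qualified V x := by
    intro x hx u v hsub
    rw [htop3 V hCV 0 x hx]
    calc {y : T | y ∈ Tr.X 0 ∧ Tr.R V y x}.ncard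
        ≤ (↑({u, v} : Finset T) : Set T).ncard :=
          Set.ncard_le_ncard hsub (Finset.finite_toSet _)
      _ ≤ 2 := by
          rw [Set.ncard_coe_finset]
          exact le_trans (Finset.card_insert_le u {v}) (by simp)
  have haq : Tr.Qualified V a := by
    refine hqual a ha0 c d ?_
    rintro y ⟨hy, hr⟩
    have hy' : y = a ∨ y = b ∨ y = c ∨ y = d := by rw [hGeq] at hy; simpa using hy
    simp only [Finset.coe_insert, Set.mem_insert_iff, Finset.coe_singleton,
      Set.mem_singleton_iff]
    rcases hy' with h | h | h | h
    · exact absurd (h ▸ hr) (hirr a ha0)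
    · exact absurd (h ▸ hr) (hasym a ha0 b hb0 hRab)
    · exact Or.inl h
    · exact Or.inr h
  have hcq : Tr.Qualified V c := by
    refine hqual c hc0 a d ?_
    rintro y ⟨hy, hr⟩
    have hy' : y = a ∨ y = b ∨ y = c ∨ y = d := by rw [hGeq] at hy; simpa using hy
    simp only [Finset.coe_insert, Set.mem_insert_iff, Finset.coe_singleton,
      Set.mem_singleton_iff]
    rcases hy' with h | h | h | h
    · exact Or.inl h
    · exact absurd (h ▸ hr) (hasym c hc0 b hb0 hRcb)
    · exact absurd (h ▸ hr) (hirr c hc0)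
    · exact Or.inr h
  have hdq : Tr.Qualified V d := by
    refine hqual d hd0 a c ?_
    rintro y ⟨hy, hr⟩
    have hy' : y = a ∨ y = b ∨ y = c ∨ y = d := by rw [hGeq] at hy; simpa using hy
    simp only [Finset.coe_insert, Set.mem_insert_iff, Finset.coe_singleton,
      Set.mem_singleton_iff]
    rcases hy' with h | h | h | h
    · exact Or.inl h
    · exact absurd (h ▸ hr) (hasym d hd0 b hb0 hRdb)
    · exact Or.inr h
    · exact absurd (h ▸ hr) (hirr d hd0)
  have haY : a ∈ Tr.Y V 0 := (hY0 V hCV a).mpr ⟨Or.inl ha0, haq⟩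
  have hcY : c ∈ Tr.Y V 0 := (hY0 V hCV c).mpr ⟨Or.inl hc0, hcq⟩
  have hdY : d ∈ Tr.Y V 0 := (hY0 V hCV d).mpr ⟨Or.inl hd0, hdq⟩
  -- the carried-over results of the honest round
  have wW : winsIn (Tr.W V) (Tr.Y V 0) a = 0 := by
    simp only [winsIn]
    rw [Finset.card_eq_zero, Finset.filter_eq_empty_iff]
    intro y hy
    rintro ⟨hya, hbt⟩
    obtain ⟨hy01, hyq⟩ := (hY0 V hCV y).mp hy
    rcases hy01 with hy0 | hy1
    · have hy' : y = a ∨ y = b ∨ y = c ∨ y = d := by rw [hGeq] at hy0; simpa using hy0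
      rcases hy' with h | h | h | h
      · exact hya h
      · exact hbnq (h ▸ hyq)
      · rw [h] at hbt hy
        simp [beats, hcarry 0 0 a ha0 c hc0 haY hy hac, vac] at hbt
      · rw [h] at hbt hy
        simp [beats, hcarry 0 0 a ha0 d hd0 haY hy had, vad] at hbt
    · simp [beats, hcross 0 1 (by decide) 0 a ha0 y hy1 haY hy] at hbt
  have lW : lossesIn (Tr.W V) (Tr.Y V 0) a = 2 := by
    have hfe : (Tr.Y V 0).filter (fun y => y ≠ a ∧ beats (Tr.W V) y a) = {c, d} := by
      ext y
      simp only [Finset.mem_filter, Finset.mem_insert, Finset.mem_singleton]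
      constructor
      · rintro ⟨hy, hya, hbt⟩
        obtain ⟨hy01, hyq⟩ := (hY0 V hCV y).mp hy
        rcases hy01 with hy0 | hy1
        · have hy' : y = a ∨ y = b ∨ y = c ∨ y = d := by rw [hGeq] at hy0; simpa using hy0
          rcases hy' with h | h | h | h
          · exact absurd h hya
          · exact absurd (h ▸ hyq) hbnq
          · exact Or.inl h
          · exact Or.inr h
        · simp [beats, hcross 1 0 (by decide) 0 y hy1 a ha0 hy haY] at hbt
      · rintro (h | h) <;> rw [h]
        · refine ⟨hcY, hac.symm, ?_⟩
          simp [beats, hcarry 0 0 c hc0 a ha0 hcY haY hac.symm, vca]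
        · refine ⟨hdY, had.symm, ?_⟩
          simp [beats, hcarry 0 0 d hd0 a ha0 hdY haY had.symm, vda]
    simp only [lossesIn]
    rw [hfe, Finset.card_insert_of_notMem (by simp [hcd]), Finset.card_singleton]
  -- the ranking of the manipulated round
  obtain ⟨-, -, hRm', -, hcarry', hcross', -⟩ := hreg V' hCW
  have hMO' := (hRm' 0).2
  obtain ⟨hirr', htrans', -⟩ := (hRm' 0).1
  have hRac : Tr.R V' a c := by
    refine hMO'.2 a ha0 c hc0 ?_ ?_ ?_
    · rw [hGeq, pa', pc']
    · rw [hGeq, ga', gc']; norm_num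
    · unfold Dominates
      rw [hGeq, ta']
      exact Or.inr ⟨by rw [qa', qc'], by rw [la', lc']; norm_num⟩
  have hRbc : Tr.R V' b c := by
    refine hMO'.2 b hb0 c hc0 ?_ ?_ ?_
    · rw [hGeq, pb', pc']
    · rw [hGeq, gb', gc']; norm_num
    · unfold Dominates
      rw [hGeq, tb']
      exact Or.inr ⟨by rw [qb', qc'], by rw [lb', lc']; norm_num⟩
  have hRdc : Tr.R V' d c := by
    refine hMO'.1 d hd0 c hc0 ?_
    rw [hGeq, pd', pc']
    linarith [Tr.hαβ]
  have hasym' : ∀ x ∈ Tr.X 0, ∀ y ∈ Tr.X 0, Tr.R V' x y → ¬Tr.R V' y x := fun x hx y hy h1 h2 =>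
    hirr' x hx (htrans' x hx y hy x hx h1 h2)
  -- who qualifies after the manipulated round
  have hcnq : ¬Tr.Qualified V' c := by
    rw [htop3 V' hCW 0 c hc0]
    push_neg
    have hsub : (↑({a, b, d} : Finset T) : Set T) ⊆ {y : T | y ∈ Tr.X 0 ∧ Tr.R V' y c} := by
      intro y hy
      simp only [Finset.coe_insert, Set.mem_insert_iff, Finset.coe_singleton,
        Set.mem_singleton_iff] at hy
      rcases hy with rfl | rfl | rfl
      · exact ⟨ha0, hRac⟩
      · exact ⟨hb0, hRbc⟩
      · exact ⟨hd0, hRdc⟩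
    have e : (↑({a, b, d} : Finset T) : Set T).ncard = 3 := by
      rw [Set.ncard_coe_finset, Finset.card_insert_of_notMem (by simp [hab, had]),
        Finset.card_insert_of_notMem (by simp [hbd]), Finset.card_singleton]
    have h2 := Set.ncard_le_ncard hsub
      (Set.Finite.subset (Tr.X 0).finite_toSet (fun y hy => hy.1))
    omega
  have hqual' : ∀ x ∈ Tr.X 0, ∀ u v : T, ({y : T | y ∈ Tr.X 0 ∧ Tr.R V' y x} ⊆
      (↑({u, v} : Finset T) : Set T)) → Tr.Qualified V' x := by
    intro x hx u v hsub
    rw [htop3 V' hCW 0 x hx]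
    calc {y : T | y ∈ Tr.X 0 ∧ Tr.R V' y x}.ncard
        ≤ (↑({u, v} : Finset T) : Set T).ncard :=
          Set.ncard_le_ncard hsub (Finset.finite_toSet _)
      _ ≤ 2 := by
          rw [Set.ncard_coe_finset]
          exact le_trans (Finset.card_insert_le u {v}) (by simp)
  have haq' : Tr.Qualified V' a := by
    refine hqual' a ha0 b d ?_
    rintro y ⟨hy, hr⟩
    have hy' : y = a ∨ y = b ∨ y = c ∨ y = d := by rw [hGeq] at hy; simpa using hy
    simp only [Finset.coe_insert, Set.mem_insert_iff, Finset.coe_singleton,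
      Set.mem_singleton_iff]
    rcases hy' with h | h | h | h
    · exact absurd (h ▸ hr) (hirr' a ha0)
    · exact Or.inl h
    · exact absurd (h ▸ hr) (hasym' a ha0 c hc0 hRac)
    · exact Or.inr h
  have hbq' : Tr.Qualified V' b := by
    refine hqual' b hb0 a d ?_
    rintro y ⟨hy, hr⟩
    have hy' : y = a ∨ y = b ∨ y = c ∨ y = d := by rw [hGeq] at hy; simpa using hy
    simp only [Finset.coe_insert, Set.mem_insert_iff, Finset.coe_singleton,
      Set.mem_singleton_iff]
    rcases hy' with h | h | h | h
    · exact Or.inl h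
    · exact absurd (h ▸ hr) (hirr' b hb0)
    · exact absurd (h ▸ hr) (hasym' b hb0 c hc0 hRbc)
    · exact Or.inr h
  have hdq' : Tr.Qualified V' d := by
    refine hqual' d hd0 a b ?_
    rintro y ⟨hy, hr⟩
    have hy' : y = a ∨ y = b ∨ y = c ∨ y = d := by rw [hGeq] at hy; simpa using hy
    simp only [Finset.coe_insert, Set.mem_insert_iff, Finset.coe_singleton,
      Set.mem_singleton_iff]
    rcases hy' with h | h | h | h
    · exact Or.inl h
    · exact Or.inr h
    · exact absurd (h ▸ hr) (hasym' d hd0 c hc0 hRdc)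
    · exact absurd (h ▸ hr) (hirr' d hd0)
  have haY' : a ∈ Tr.Y V' 0 := (hY0 V' hCW a).mpr ⟨Or.inl ha0, haq'⟩
  have hbY' : b ∈ Tr.Y V' 0 := (hY0 V' hCW b).mpr ⟨Or.inl hb0, hbq'⟩
  have hdY' : d ∈ Tr.Y V' 0 := (hY0 V' hCW d).mpr ⟨Or.inl hd0, hdq'⟩
  -- the carried-over results of the manipulated round
  have wW' : winsIn (Tr.W V') (Tr.Y V' 0) a = 1 := by
    have hfe : (Tr.Y V' 0).filter (fun y => y ≠ a ∧ beats (Tr.W V') a y) = {b} := by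
      ext y
      simp only [Finset.mem_filter, Finset.mem_singleton]
      constructor
      · rintro ⟨hy, hya, hbt⟩
        obtain ⟨hy01, hyq⟩ := (hY0 V' hCW y).mp hy
        rcases hy01 with hy0 | hy1
        · have hy' : y = a ∨ y = b ∨ y = c ∨ y = d := by rw [hGeq] at hy0; simpa using hy0
          rcases hy' with h | h | h | h
          · exact absurd h hya
          · exact h
          · exact absurd (h ▸ hyq) hcnq
          · rw [h] at hbt hy
            simp [beats, hcarry' 0 0 a ha0 d hd0 haY' hy had, wad] at hbt
        · simp [beats, hcross' 0 1 (by decide) 0 a ha0 y hy1 haY' hy] at hbt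
      · intro h
        rw [h]
        refine ⟨hbY', hab.symm, ?_⟩
        simp [beats, hcarry' 0 0 a ha0 b hb0 haY' hbY' hab, wab]
    simp only [winsIn]
    rw [hfe, Finset.card_singleton]
  have lW' : lossesIn (Tr.W V') (Tr.Y V' 0) a = 1 := by
    have hfe : (Tr.Y V' 0).filter (fun y => y ≠ a ∧ beats (Tr.W V') y a) = {d} := by
      ext y
      simp only [Finset.mem_filter, Finset.mem_singleton]
      constructor
      · rintro ⟨hy, hya, hbt⟩
        obtain ⟨hy01, hyq⟩ := (hY0 V' hCW y).mp hy
        rcases hy01 with hy0 | hy1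
        · have hy' : y = a ∨ y = b ∨ y = c ∨ y = d := by rw [hGeq] at hy0; simpa using hy0
          rcases hy' with h | h | h | h
          · exact absurd h hya
          · rw [h] at hbt hy
            simp [beats, hcarry' 0 0 b hb0 a ha0 hy haY' hab.symm, wba] at hbt
          · exact absurd (h ▸ hyq) hcnq
          · exact h
        · simp [beats, hcross' 1 0 (by decide) 0 y hy1 a ha0 hy haY'] at hbt
      · intro h
        rw [h]
        refine ⟨hdY', had.symm, ?_⟩
        simp [beats, hcarry' 0 0 d hd0 a ha0 hdY' haY' had.symm, wda]
    simp only [lossesIn]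
    rw [hfe, Finset.card_singleton]
  -- the payoff of the manipulation
  have hpts : pointsIn Tr.α Tr.β (Tr.W V') (Tr.Y V' 0) a
      > pointsIn Tr.α Tr.β (Tr.W V) (Tr.Y V 0) a := by
    simp only [pointsIn, wW, lW, wW', lW']
    push_cast
    linarith [Tr.hαβ]
  -- the two result sets only differ in the match between `a` and `b`
  have hsame : ∀ y z : T, y ≠ a → z ≠ a → V' y z = V y z := by
    intro y z hy hz
    rw [hVdef, hWdef]
    unfold EHFAux.fullRes
    by_cases hcnd : y ∈ Tr.X 0 ∧ z ∈ Tr.X 0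
    · rw [if_pos hcnd, if_pos hcnd]
      unfold EHFAux.tV EHFAux.tV'
      exact EHFAux.mat'_eq_mat _ _ (fun h => EHFAux.idx_ne_zero a b c d y hy h.1)
        (fun h => EHFAux.idx_ne_zero a b c d z hz h.2)
    · rw [if_neg hcnd, if_neg hcnd]
  -- `a` performs weakly worse in the manipulated round
  have hworse : ∀ y : T, ∀ p q p' q' : ℕ, V a y = some (p, q) → V' a y = some (p', q') →
      p' ≤ p ∧ q ≤ q' := by
    intro y p q p' q' h1 h2
    by_cases hy : y ∈ Tr.X 0
    · have hy' : y = a ∨ y = b ∨ y = c ∨ y = d := by rw [hGeq] at hy; simpa using hy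
      rcases hy' with h | h | h | h
      · rw [h, vaa] at h1; exact (Option.some_ne_none _ h1.symm).elim
      · rw [h, vab] at h1; rw [h, wab] at h2
        obtain ⟨hp, hq⟩ : 27 = p ∧ 0 = q := by simpa using h1
        obtain ⟨hp', hq'⟩ : 1 = p' ∧ 0 = q' := by simpa using h2
        omega
      · rw [h, vac] at h1; rw [h, wac] at h2
        obtain ⟨hp, hq⟩ : 0 = p ∧ 1 = q := by simpa using h1
        obtain ⟨hp', hq'⟩ : 0 = p' ∧ 1 = q' := by simpa using h2
        omega
      · rw [h, vad] at h1; rw [h, wad] at h2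
        obtain ⟨hp, hq⟩ : 0 = p ∧ 1 = q := by simpa using h1
        obtain ⟨hp', hq'⟩ : 0 = p' ∧ 1 = q' := by simpa using h2
        omega
    · have hnone : V a y = none := by
        have hno : ¬(a ≠ y ∧ ∃ i, a ∈ Tr.X i ∧ y ∈ Tr.X i) := by
          rintro ⟨hne, i, hai, hyi⟩
          have hi0 : i = 0 := by
            by_contra hi
            exact Finset.disjoint_left.mp (Tr.Xdisj i 0 hi) hai ha0
          exact hy (hi0 ▸ hyi)
        rw [hVdef]
        unfold EHFAux.fullRes
        rw [if_neg (fun hcnd => hy hcnd.2), if_neg hno]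
      rw [hnone] at h1
      exact (Option.some_ne_none _ h1.symm).elim
  -- conclusion: team `a` manipulates
  exact hsp a ⟨V, V', hCV, hCW, hsame, hworse, 0, haY, haY', Or.inl hpts⟩
end
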